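/- For any n ≥ 1 and any family A of subsets of [n] with |A| ≥ 2^{n-1}, we have f(A) := 2e(A) + |A ∩ Ā| ≤ 2F(|A|) + 2|A| - 2^n. -/

import Mathlib

open Finset

/-- Number of edges of the hypercube graph `Q_n` with both endpoints in `A`
(ordered pairs counted, then halved). -/
def edgeCount {n : ℕ} (A : Finset (Finset (Fin n))) : ℕ :=
  ((A ×ˢ A).filter (fun p => (symmDiff p.1 p.2).card = 1)).card / 2

/-- Number of edges of `Q_n` with exactly one endpoint in `A` (the edge boundary). -/
def edgeBoundary {n : ℕ} (A : Finset (Finset (Fin n))) : ℕ :=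
  ((A ×ˢ Aᶜ).filter (fun p => (symmDiff p.1 p.2).card = 1)).card

/-- Number of edges of `Q_n` with one endpoint in `X` and the other in `Y`. -/
def edgesBetween {n : ℕ} (X Y : Finset (Finset (Fin n))) : ℕ :=
  ((X ×ˢ Y).filter (fun p => (symmDiff p.1 p.2).card = 1)).card

/-- The antipodal image of a family: pointwise complementation in `[n]`. -/
def barFam {n : ℕ} (A : Finset (Finset (Fin n))) : Finset (Finset (Fin n)) :=
  A.image (fun x => xᶜ)

/-- Pointwise complementation within a ground set `s`. -/
def barOn {n : ℕ} (s : Finset (Fin n)) (A : Finset (Finset (Fin n))) :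
    Finset (Finset (Fin n)) :=
  A.image (fun x => s \ x)

/-- The upper `i`-section of `A`, as a family of subsets of `[n] \ {i}`. -/
def secUp {n : ℕ} (A : Finset (Finset (Fin n))) (i : Fin n) : Finset (Finset (Fin n)) :=
  Finset.univ.filter (fun x => i ∉ x ∧ insert i x ∈ A)

/-- The lower `i`-section of `A`, as a family of subsets of `[n] \ {i}`. -/
def secDown {n : ℕ} (A : Finset (Finset (Fin n))) (i : Fin n) : Finset (Finset (Fin n)) :=
  Finset.univ.filter (fun x => i ∉ x ∧ x ∈ A)

/-- The value of a subset of `[n]` in the binary ordering. -/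
def setToNat {n : ℕ} (x : Finset (Fin n)) : ℕ := ∑ i ∈ x, 2 ^ (i : ℕ)

/-- The initial segment of size `k` of the binary ordering on subsets of `[n]`
(for `k ≤ 2^n`). -/
def iseg (n k : ℕ) : Finset (Finset (Fin n)) :=
  Finset.univ.filter (fun x => setToNat x < k)

/-- `F k`: the number of hypercube edges induced by the initial segment of size `k`
of the binary ordering; equals the sum of binary digit sums of `0, …, k-1`. -/
def binF (k : ℕ) : ℕ := ∑ i ∈ Finset.range k, (Nat.digits 2 i).sum

/-- The subcube of subsets of `[n]` contained in the first `d` coordinates. -/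
def subcube (n d : ℕ) : Finset (Finset (Fin n)) :=
  Finset.univ.filter (fun x => ∀ i ∈ x, (i : ℕ) < d)




def s2 (n : ℕ) : ℕ := (Nat.digits 2 n).sum

lemma s2_zero : s2 0 = 0 := by simp [s2]

lemma s2_def (n : ℕ) (hn : 0 < n) : s2 n = n % 2 + s2 (n / 2) := by
  unfold s2
  rw [Nat.digits_def' (by norm_num : 1 < 2) hn]
  simp

lemma s2_two_mul (n : ℕ) : s2 (2 * n) = s2 n := by
  rcases Nat.eq_zero_or_pos n with h | h
  · simp [h, s2_zero]
  · rw [s2_def _ (by omega)]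
    simp [Nat.mul_div_cancel_left _ (by norm_num : 0 < 2), Nat.mul_mod_right]

lemma s2_two_mul_add_one (n : ℕ) : s2 (2 * n + 1) = s2 n + 1 := by
  rw [s2_def _ (by omega)]
  have h1 : (2 * n + 1) % 2 = 1 := by omega
  have h2 : (2 * n + 1) / 2 = n := by omega
  rw [h1, h2]; omega

lemma binF_succ (k : ℕ) : binF (k + 1) = binF k + s2 k := by
  unfold binF s2
  rw [Finset.sum_range_succ]

lemma binF_zero : binF 0 = 0 := rfl

lemma binF_two_mul (m : ℕ) : binF (2 * m) = 2 * binF m + m := by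
  induction m with
  | zero => simp [binF_zero]
  | succ m ih =>
    have : 2 * (m + 1) = 2 * m + 1 + 1 := by ring
    rw [this, binF_succ, binF_succ, ih, binF_succ, s2_two_mul, s2_two_mul_add_one]
    ring

lemma binF_two_mul_add_one (m : ℕ) : binF (2 * m + 1) = binF m + binF (m + 1) + m := by
  rw [binF_succ, binF_two_mul, binF_succ, s2_two_mul]
  ring

/-- Hart's lemma, ordered version. -/
lemma hart_aux : ∀ n s t : ℕ, s + t ≤ n → t ≤ s → binF s + binF t + t ≤ binF (s + t) := by
  intro n
  induction n with
  | zero =>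
    intro s t h ht
    have hs0 : s = 0 := by omega
    have ht0 : t = 0 := by omega
    subst hs0 ht0; simp [binF_zero]
  | succ n ih =>
    intro s t h ht
    rcases Nat.lt_or_ge (s + t) (n + 1) with hlt | hge
    · exact ih s t (by omega) ht
    have hst : s + t = n + 1 := by omega
    rcases Nat.eq_zero_or_pos t with ht0 | ht0
    · subst ht0; simp [binF_zero]
    rcases Nat.even_or_odd s with ⟨a, ha⟩ | ⟨a, ha⟩ <;>
      rcases Nat.even_or_odd t with ⟨b, hb⟩ | ⟨b, hb⟩
    · -- s = 2a, t = 2b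
      have hs : s = 2 * a := by omega
      have htt : t = 2 * b := by omega
      subst hs htt
      have h1 : binF a + binF b + b ≤ binF (a + b) := ih a b (by omega) (by omega)
      have e1 : 2 * a + 2 * b = 2 * (a + b) := by ring
      rw [e1, binF_two_mul, binF_two_mul, binF_two_mul]
      omega
    · -- s = 2a, t = 2b+1
      have hs : s = 2 * a := by omega
      have htt : t = 2 * b + 1 := by omega
      subst hs htt
      have hba : b + 1 ≤ a := by omega
      have h1 : binF a + binF b + b ≤ binF (a + b) := ih a b (by omega) (by omega)
      have h2 : binF a + binF (b + 1) + (b + 1) ≤ binF (a + (b + 1)) :=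
        ih a (b + 1) (by omega) (by omega)
      have e1 : 2 * a + (2 * b + 1) = 2 * (a + b) + 1 := by ring
      rw [show a + (b + 1) = a + b + 1 by ring] at h2
      rw [e1, binF_two_mul_add_one, binF_two_mul, binF_two_mul_add_one]
      omega
    · -- s = 2a+1, t = 2b
      have hs : s = 2 * a + 1 := by omega
      have htt : t = 2 * b := by omega
      subst hs htt
      have h1 : binF a + binF b + b ≤ binF (a + b) := ih a b (by omega) (by omega)
      have h2 : binF (a + 1) + binF b + b ≤ binF (a + 1 + b) :=
        ih (a + 1) b (by omega) (by omega)
      have e1 : 2 * a + 1 + 2 * b = 2 * (a + b) + 1 := by ring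
      rw [show a + 1 + b = a + b + 1 by ring] at h2
      rw [e1, binF_two_mul_add_one, binF_two_mul_add_one, binF_two_mul]
      omega
    · -- s = 2a+1, t = 2b+1
      have hs : s = 2 * a + 1 := by omega
      have htt : t = 2 * b + 1 := by omega
      subst hs htt
      rcases Nat.eq_or_lt_of_le (show b ≤ a by omega) with hab | hab
      · subst hab
        have e1 : 2 * b + 1 + (2 * b + 1) = 2 * (2 * b + 1) := by ring
        rw [e1, binF_two_mul]
        omega
      · have h1 : binF a + binF (b + 1) + (b + 1) ≤ binF (a + (b + 1)) :=
          ih a (b + 1) (by omega) (by omega)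
        have h2 : binF (a + 1) + binF b + b ≤ binF (a + 1 + b) :=
          ih (a + 1) b (by omega) (by omega)
        have e1 : 2 * a + 1 + (2 * b + 1) = 2 * (a + b + 1) := by ring
        rw [show a + (b + 1) = a + b + 1 by ring] at h1
        rw [show a + 1 + b = a + b + 1 by ring] at h2
        rw [e1, binF_two_mul, binF_two_mul_add_one, binF_two_mul_add_one]
        omega

lemma hart (s t : ℕ) : binF s + binF t + min s t ≤ binF (s + t) := by
  rcases Nat.le_total t s with h | h
  · have := hart_aux (s + t) s t le_rfl h
    omega
  · have := hart_aux (t + s) t s le_rfl h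
    rw [Nat.add_comm t s] at this
    omega

/-- `binF (2^j + k) = binF (2^j) + binF k + k` for `k ≤ 2^j`. -/
lemma binF_pow_add : ∀ j k : ℕ, k ≤ 2 ^ j → binF (2 ^ j + k) = binF (2 ^ j) + binF k + k := by
  intro j
  induction j with
  | zero =>
    intro k hk
    interval_cases k
    · simp [binF_zero]
    · show binF 2 = binF 1 + binF 1 + 1
      rw [show (2 : ℕ) = 2 * 1 by ring, binF_two_mul]
      simp [binF_succ, binF_zero, s2_zero]
  | succ j ih =>
    intro k hk
    have hp : 2 ^ (j + 1) = 2 * 2 ^ j := by ring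
    rcases Nat.even_or_odd k with ⟨c, hc⟩ | ⟨c, hc⟩
    · have hk2 : k = 2 * c := by omega
      subst hk2
      have hc2 : c ≤ 2 ^ j := by omega
      have e1 : 2 ^ (j + 1) + 2 * c = 2 * (2 ^ j + c) := by rw [hp]; ring
      rw [e1, binF_two_mul, ih c hc2, hp, binF_two_mul, binF_two_mul]
      omega
    · have hk2 : k = 2 * c + 1 := by omega
      subst hk2
      have hc2 : c + 1 ≤ 2 ^ j := by omega
      have e1 : 2 ^ (j + 1) + (2 * c + 1) = 2 * (2 ^ j + c) + 1 := by rw [hp]; ring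
      rw [e1, binF_two_mul_add_one, ih c (by omega),
        show 2 ^ j + c + 1 = 2 ^ j + (c + 1) by ring, ih (c + 1) hc2,
        hp, binF_two_mul, binF_two_mul_add_one]
      omega

/-- complement identity: `binF (2^j - u) + j*u = binF (2^j) + binF u` for `u ≤ 2^j`. -/
lemma binF_pow_sub : ∀ j u : ℕ, u ≤ 2 ^ j → binF (2 ^ j - u) + j * u = binF (2 ^ j) + binF u := by
  intro j
  induction j with
  | zero =>
    intro u hu
    interval_cases u
    · simp [binF_zero]
    · show binF 0 + 0 * 1 = binF 1 + binF 1
      simp [binF_succ, binF_zero, s2_zero]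
  | succ j ih =>
    intro u hu
    have hp : 2 ^ (j + 1) = 2 * 2 ^ j := by ring
    rcases Nat.even_or_odd u with ⟨c, hc⟩ | ⟨c, hc⟩
    · have hu2 : u = 2 * c := by omega
      subst hu2
      have hc2 : c ≤ 2 ^ j := by omega
      have e1 : 2 ^ (j + 1) - 2 * c = 2 * (2 ^ j - c) := by omega
      have ihc := ih c hc2
      rw [e1, binF_two_mul, binF_two_mul, hp, binF_two_mul]
      have : (j + 1) * (2 * c) = 2 * (j * c) + 2 * c := by ring
      omega
    · have hu2 : u = 2 * c + 1 := by omega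
      subst hu2
      have hc2 : c + 1 ≤ 2 ^ j := by omega
      have e1 : 2 ^ (j + 1) - (2 * c + 1) = 2 * (2 ^ j - (c + 1)) + 1 := by omega
      have ihc := ih c (by omega)
      have ihc1 := ih (c + 1) hc2
      rw [e1, binF_two_mul_add_one, binF_two_mul_add_one, hp, binF_two_mul,
        show 2 ^ j - (c + 1) + 1 = 2 ^ j - c by omega]
      have : (j + 1) * (2 * c + 1) = j * c + j * (c + 1) + 2 * c + 1 := by ring
      omega

/-- Key lemma: superadditivity of `Φ_j(k) = binF k + (k ∸ 2^j)`. -/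
lemma phi_superadd (j s t : ℕ) (hts : t ≤ s) (hdiff : s ≤ t + 2 ^ j) (hs : s ≤ 2 ^ (j + 1)) :
    binF s + binF t + t + (s - 2 ^ j) + (t - 2 ^ j) ≤
      binF (s + t) + (s + t - 2 ^ (j + 1)) := by
  have h2 : 2 ^ (j + 1) = 2 * 2 ^ j := by ring
  rcases le_or_gt s (2 ^ j) with hsle | hsgt
  · -- case (a)
    have := hart_aux (s + t) s t le_rfl hts
    omega
  rcases le_or_gt (2 ^ j) t with htge | htlt
  · -- case (b)
    have := hart_aux (s + t) s t le_rfl hts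
    omega
  -- case (c): t < 2^j < s
  set p := s - 2 ^ j with hpdef
  have hps : s = 2 ^ j + p := by omega
  have hpt : p ≤ t := by omega
  have hpj : p ≤ 2 ^ j := by omega
  have hbs : binF s = binF (2 ^ j) + binF p + p := by rw [hps]; exact binF_pow_add j p hpj
  rcases le_or_gt (s + t) (2 ^ (j + 1)) with hc1 | hc2
  · -- case (c1)
    have hptj : p + t ≤ 2 ^ j := by omega
    have hbst : binF (s + t) = binF (2 ^ j) + binF (p + t) + (p + t) := by
      rw [show s + t = 2 ^ j + (p + t) by omega]
      exact binF_pow_add j (p + t) hptj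
    have := hart_aux (t + p) t p le_rfl hpt
    rw [show t + p = p + t by ring] at this
    omega
  · -- case (c2)
    set q := s + t - 2 ^ (j + 1) with hqdef
    have hq : q = p + t - 2 ^ j := by omega
    have hq1 : 1 ≤ q := by omega
    have hqt : q ≤ t := by omega
    have hbst : binF (s + t) = binF (2 ^ (j + 1)) + binF q + q := by
      rw [show s + t = 2 ^ (j + 1) + q by omega]
      exact binF_pow_add (j + 1) q (by omega)
    have hb2 : binF (2 ^ (j + 1)) = 2 * binF (2 ^ j) + 2 ^ j := by
      rw [h2, binF_two_mul]
    set α := 2 ^ j - p with hα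
    set β := 2 ^ j - t with hβ
    have hαβq : q + (α + β) = 2 ^ j := by omega
    have hβα : β ≤ α := by omega
    have i1 : binF p + j * α = binF (2 ^ j) + binF α := by
      have := binF_pow_sub j α (by omega)
      rw [show 2 ^ j - α = p by omega] at this
      omega
    have i2 : binF t + j * β = binF (2 ^ j) + binF β := by
      have := binF_pow_sub j β (by omega)
      rw [show 2 ^ j - β = t by omega] at this
      omega
    have i3 : binF q + j * (α + β) = binF (2 ^ j) + binF (α + β) := by
      have := binF_pow_sub j (α + β) (by omega)
      rw [show 2 ^ j - (α + β) = q by omega] at this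
      omega
    have hmul : j * (α + β) = j * α + j * β := by ring
    have hh := hart_aux (α + β) α β le_rfl hβα
    omega

/-- symmetric wrapper -/
lemma phi_superadd' (j s1 s2 : ℕ) (h1 : s1 ≤ s2 + 2 ^ j) (h2 : s2 ≤ s1 + 2 ^ j)
    (hb1 : s1 ≤ 2 ^ (j + 1)) (hb2 : s2 ≤ 2 ^ (j + 1)) :
    binF s1 + binF s2 + min s1 s2 + (s1 - 2 ^ j) + (s2 - 2 ^ j) ≤
      binF (s1 + s2) + (s1 + s2 - 2 ^ (j + 1)) := by
  rcases Nat.le_total s2 s1 with h | h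
  · have := phi_superadd j s1 s2 h h1 hb1
    omega
  · have := phi_superadd j s2 s1 h h2 hb2
    rw [show s2 + s1 = s1 + s2 by ring] at this
    omega


variable {n : ℕ}

def E2 (X : Finset (Finset (Fin n))) : ℕ :=
  ((X ×ˢ X).filter (fun p => (symmDiff p.1 p.2).card = 1)).card

def PF (s : Finset (Fin n)) (X Y : Finset (Finset (Fin n))) : ℕ :=
  E2 X + E2 Y + 2 * (X ∩ Y).card + 2 * (X ∩ barOn s Y).card

lemma symmDiff_erase {i : Fin n} {x y : Finset (Fin n)} (hx : i ∈ x) (hy : i ∈ y) :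
    symmDiff (x.erase i) (y.erase i) = symmDiff x y := by
  ext j
  by_cases hji : j = i
  · subst hji
    simp [Finset.mem_symmDiff, hx, hy]
  · simp [Finset.mem_symmDiff, Finset.mem_erase, hji]

lemma adj_insert_bot {i : Fin n} {x y : Finset (Fin n)} (hx : i ∉ x) (hy : i ∈ y) :
    (symmDiff x y).card = 1 ↔ y = insert i x := by
  constructor
  · intro h
    have hi : i ∈ symmDiff x y := by simp [Finset.mem_symmDiff, hx, hy]
    have hxy : symmDiff x y = {i} := by
      rcases Finset.card_eq_one.mp h with ⟨a, ha⟩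
      rw [ha] at hi ⊢
      simp at hi
      rw [hi]
    ext j
    by_cases hji : j = i
    · subst hji; simp [hy]
    · have : j ∉ symmDiff x y := by rw [hxy]; simp [hji]
      simp only [Finset.mem_symmDiff] at this
      simp [Finset.mem_insert, hji]
      tauto
  · rintro rfl
    have : symmDiff x (insert i x) = {i} := by
      ext j
      by_cases hji : j = i
      · subst hji; simp [Finset.mem_symmDiff, hx]
      · simp [Finset.mem_symmDiff, hji]
    rw [this]; simp

lemma mem_image_erase {i : Fin n} {X : Finset (Finset (Fin n))} {x : Finset (Fin n)} :
    x ∈ (X.filter (fun z => i ∈ z)).image (fun z => z.erase i) ↔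
      i ∉ x ∧ insert i x ∈ X := by
  simp only [Finset.mem_image, Finset.mem_filter]
  constructor
  · rintro ⟨z, ⟨hzX, hiz⟩, rfl⟩
    refine ⟨Finset.notMem_erase i z, ?_⟩
    rwa [Finset.insert_erase hiz]
  · rintro ⟨hix, hX⟩
    exact ⟨insert i x, ⟨hX, Finset.mem_insert_self i x⟩, Finset.erase_insert hix⟩

lemma card_image_erase (i : Fin n) (X : Finset (Finset (Fin n))) :
    ((X.filter (fun z => i ∈ z)).image (fun z => z.erase i)).card
      = (X.filter (fun z => i ∈ z)).card := by
  apply Finset.card_image_of_injOn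
  intro a ha b hb hab
  simp only [Finset.mem_coe, Finset.mem_filter] at ha hb
  have := congrArg (insert i) hab
  rwa [Finset.insert_erase ha.2, Finset.insert_erase hb.2] at this

lemma card_split (i : Fin n) (X : Finset (Finset (Fin n))) :
    X.card = (X.filter (fun x => i ∉ x)).card
      + ((X.filter (fun z => i ∈ z)).image (fun z => z.erase i)).card := by
  rw [card_image_erase]
  have h1 := Finset.card_filter_add_card_filter_not (p := fun x => i ∈ x) (s := X)
  have h2 : X.filter (fun x => ¬ i ∈ x) = X.filter (fun x => i ∉ x) := by
    apply Finset.filter_congr; intro z _; simp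
  rw [h2] at h1
  omega

lemma symmDiff_insert {i : Fin n} {x y : Finset (Fin n)} (hx : i ∉ x) (hy : i ∉ y) :
    symmDiff (insert i x) (insert i y) = symmDiff x y := by
  have h := symmDiff_erase (Finset.mem_insert_self i x) (Finset.mem_insert_self i y)
  rw [Finset.erase_insert hx, Finset.erase_insert hy] at h
  exact h.symm

lemma E2_split (i : Fin n) (X : Finset (Finset (Fin n))) :
    E2 X = E2 (X.filter (fun x => i ∉ x))
      + E2 ((X.filter (fun z => i ∈ z)).image (fun z => z.erase i))
      + 2 * ((X.filter (fun x => i ∉ x))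
          ∩ (X.filter (fun z => i ∈ z)).image (fun z => z.erase i)).card := by
  classical
  set X0 := X.filter (fun x => i ∉ x) with hX0
  set X1 := (X.filter (fun z => i ∈ z)).image (fun z => z.erase i) with hX1
  set adj : Finset (Fin n) × Finset (Fin n) → Prop :=
    fun p => (symmDiff p.1 p.2).card = 1 with hadj
  set S := (X ×ˢ X).filter adj with hS
  have hsplit : S.card =
      (S.filter (fun p => i ∉ p.1 ∧ i ∉ p.2)).card
      + (S.filter (fun p => i ∉ p.1 ∧ i ∈ p.2)).card
      + (S.filter (fun p => i ∈ p.1 ∧ i ∉ p.2)).card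
      + (S.filter (fun p => i ∈ p.1 ∧ i ∈ p.2)).card := by
    have key : ∀ (T : Finset (Finset (Fin n) × Finset (Fin n))), T.card =
        (T.filter (fun p => i ∉ p.1 ∧ i ∉ p.2)).card
        + (T.filter (fun p => i ∉ p.1 ∧ i ∈ p.2)).card
        + (T.filter (fun p => i ∈ p.1 ∧ i ∉ p.2)).card
        + (T.filter (fun p => i ∈ p.1 ∧ i ∈ p.2)).card := by
      intro T
      induction T using Finset.induction_on with
      | empty => simp
      | @insert p T hp ihT =>
        by_cases h1 : i ∈ p.1 <;> by_cases h2 : i ∈ p.2 <;>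
          rw [Finset.filter_insert, Finset.filter_insert, Finset.filter_insert,
            Finset.filter_insert] <;>
          simp only [h1, h2, not_true_eq_false, not_false_eq_true, true_and, false_and,
            and_true, and_false, if_true, if_false] <;>
          rw [Finset.card_insert_of_notMem (by simp [hp]),
            Finset.card_insert_of_notMem (by simp [hp])] <;>
          omega
    exact key S
  have hmemS : ∀ p : Finset (Fin n) × Finset (Fin n),
      p ∈ S ↔ p.1 ∈ X ∧ p.2 ∈ X ∧ (symmDiff p.1 p.2).card = 1 := by
    intro p
    simp only [hS, hadj, Finset.mem_filter, Finset.mem_product]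
    tauto
  -- part 00
  have c00 : S.filter (fun p => i ∉ p.1 ∧ i ∉ p.2) = (X0 ×ˢ X0).filter adj := by
    ext p
    simp only [Finset.mem_filter, Finset.mem_product, hmemS, hX0, hadj]
    tauto
  -- part 11
  have c11 : (S.filter (fun p => i ∈ p.1 ∧ i ∈ p.2)).card = ((X1 ×ˢ X1).filter adj).card := by
    apply Finset.card_nbij' (fun p => (p.1.erase i, p.2.erase i))
      (fun p => (insert i p.1, insert i p.2))
    · intro p hp
      simp only [Finset.mem_coe, Finset.mem_filter, hmemS] at hp
      obtain ⟨⟨h1, h2, h3⟩, h4, h5⟩ := hp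
      simp only [Finset.mem_coe, Finset.mem_filter, Finset.mem_product, hadj]
      refine ⟨⟨?_, ?_⟩, ?_⟩
      · rw [hX1, mem_image_erase]
        exact ⟨Finset.notMem_erase i _, by rwa [Finset.insert_erase h4]⟩
      · rw [hX1, mem_image_erase]
        exact ⟨Finset.notMem_erase i _, by rwa [Finset.insert_erase h5]⟩
      · show (symmDiff (p.1.erase i) (p.2.erase i)).card = 1
        rw [symmDiff_erase h4 h5]; exact h3
    · intro q hq
      simp only [Finset.mem_coe, Finset.mem_filter, Finset.mem_product, hadj] at hq
      obtain ⟨⟨h1, h2⟩, h3⟩ := hq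
      rw [hX1, mem_image_erase] at h1 h2
      simp only [Finset.mem_coe, Finset.mem_filter, hmemS]
      refine ⟨⟨h1.2, h2.2, ?_⟩, ?_, ?_⟩
      · show (symmDiff (insert i q.1) (insert i q.2)).card = 1
        rw [symmDiff_insert h1.1 h2.1]; exact h3
      · exact Finset.mem_insert_self i q.1
      · exact Finset.mem_insert_self i q.2
    · intro p hp
      simp only [Finset.mem_coe, Finset.mem_filter] at hp
      ext1
      · exact Finset.insert_erase hp.2.1
      · exact Finset.insert_erase hp.2.2
    · intro q hq
      simp only [Finset.mem_coe, Finset.mem_filter, Finset.mem_product] at hq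
      rw [hX1, mem_image_erase] at hq
      ext1
      · exact Finset.erase_insert hq.1.1.1
      · have : i ∉ q.2 := by
          have h2 := hq.1.2
          rw [mem_image_erase] at h2
          exact h2.1
        exact Finset.erase_insert this
  -- part 01
  have c01 : (S.filter (fun p => i ∉ p.1 ∧ i ∈ p.2)).card = (X0 ∩ X1).card := by
    apply Finset.card_nbij' (fun p => p.1) (fun x => (x, insert i x))
    · intro p hp
      simp only [Finset.mem_coe, Finset.mem_filter, hmemS] at hp
      obtain ⟨⟨h1, h2, h3⟩, h4, h5⟩ := hp
      have hp2 : p.2 = insert i p.1 := (adj_insert_bot h4 h5).mp h3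
      rw [Finset.mem_coe, Finset.mem_inter, hX0, Finset.mem_filter, hX1, mem_image_erase]
      exact ⟨⟨h1, h4⟩, h4, by rwa [← hp2]⟩
    · intro x hx
      rw [Finset.mem_coe, Finset.mem_inter, hX0, Finset.mem_filter, hX1, mem_image_erase] at hx
      obtain ⟨⟨h1, h2⟩, _, h3⟩ := hx
      simp only [Finset.mem_coe, Finset.mem_filter, hmemS]
      exact ⟨⟨h1, h3, (adj_insert_bot h2 (Finset.mem_insert_self i x)).mpr rfl⟩,
        h2, Finset.mem_insert_self i x⟩
    · intro p hp
      simp only [Finset.mem_coe, Finset.mem_filter, hmemS] at hp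
      obtain ⟨⟨h1, h2, h3⟩, h4, h5⟩ := hp
      have hp2 : p.2 = insert i p.1 := (adj_insert_bot h4 h5).mp h3
      ext1
      · rfl
      · exact hp2.symm
    · intro x hx; rfl
  -- part 10
  have c10 : (S.filter (fun p => i ∈ p.1 ∧ i ∉ p.2)).card = (X0 ∩ X1).card := by
    apply Finset.card_nbij' (fun p => p.2) (fun x => (insert i x, x))
    · intro p hp
      simp only [Finset.mem_coe, Finset.mem_filter, hmemS] at hp
      obtain ⟨⟨h1, h2, h3⟩, h4, h5⟩ := hp
      rw [symmDiff_comm] at h3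
      have hp1 : p.1 = insert i p.2 := (adj_insert_bot h5 h4).mp h3
      rw [Finset.mem_coe, Finset.mem_inter, hX0, Finset.mem_filter, hX1, mem_image_erase]
      exact ⟨⟨h2, h5⟩, h5, by rwa [← hp1]⟩
    · intro x hx
      rw [Finset.mem_coe, Finset.mem_inter, hX0, Finset.mem_filter, hX1, mem_image_erase] at hx
      obtain ⟨⟨h1, h2⟩, _, h3⟩ := hx
      simp only [Finset.mem_coe, Finset.mem_filter, hmemS]
      refine ⟨⟨h3, h1, ?_⟩, Finset.mem_insert_self i x, h2⟩
      show (symmDiff (insert i x) x).card = 1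
      rw [symmDiff_comm]
      exact (adj_insert_bot h2 (Finset.mem_insert_self i x)).mpr rfl
    · intro p hp
      simp only [Finset.mem_coe, Finset.mem_filter, hmemS] at hp
      obtain ⟨⟨h1, h2, h3⟩, h4, h5⟩ := hp
      rw [symmDiff_comm] at h3
      have hp1 : p.1 = insert i p.2 := (adj_insert_bot h5 h4).mp h3
      ext1
      · exact hp1.symm
      · rfl
    · intro x hx; rfl
  show S.card = ((X0 ×ˢ X0).filter adj).card + ((X1 ×ˢ X1).filter adj).card + 2 * (X0 ∩ X1).card
  rw [hsplit, c00, c01, c10, c11]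
  omega

lemma mem_barOn {s : Finset (Fin n)} {Y : Finset (Finset (Fin n))} (hY : Y ⊆ s.powerset)
    {v : Finset (Fin n)} : v ∈ barOn s Y ↔ v ⊆ s ∧ s \ v ∈ Y := by
  constructor
  · rintro hv
    rw [barOn, Finset.mem_image] at hv
    obtain ⟨y, hy, rfl⟩ := hv
    have hys : y ⊆ s := Finset.mem_powerset.mp (hY hy)
    rw [Finset.sdiff_sdiff_self_left, Finset.inter_eq_right.mpr hys]
    exact ⟨Finset.sdiff_subset, hy⟩
  · rintro ⟨hvs, hv⟩
    rw [barOn, Finset.mem_image]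
    exact ⟨s \ v, hv, by rw [Finset.sdiff_sdiff_self_left, Finset.inter_eq_right.mpr hvs]⟩

lemma inter_split (i : Fin n) (X Y : Finset (Finset (Fin n))) :
    (X ∩ Y).card = ((X.filter (fun x => i ∉ x)) ∩ (Y.filter (fun x => i ∉ x))).card
      + (((X.filter (fun z => i ∈ z)).image (fun z => z.erase i))
          ∩ ((Y.filter (fun z => i ∈ z)).image (fun z => z.erase i))).card := by
  rw [card_split i (X ∩ Y)]
  congr 1
  · congr 1
    ext z
    simp only [Finset.mem_filter, Finset.mem_inter]
    tauto
  · congr 1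
    ext u
    simp only [Finset.mem_inter, mem_image_erase]
    tauto

lemma bar_split {i : Fin n} {s' : Finset (Fin n)} (hi : i ∉ s')
    (X Y : Finset (Finset (Fin n)))
    (hX : X ⊆ (insert i s').powerset) (hY : Y ⊆ (insert i s').powerset) :
    (X ∩ barOn (insert i s') Y).card
      = ((X.filter (fun x => i ∉ x))
          ∩ barOn s' ((Y.filter (fun z => i ∈ z)).image (fun z => z.erase i))).card
      + (((X.filter (fun z => i ∈ z)).image (fun z => z.erase i))
          ∩ barOn s' (Y.filter (fun x => i ∉ x))).card := by
  have hY1 : ((Y.filter (fun z => i ∈ z)).image (fun z => z.erase i)) ⊆ s'.powerset := by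
    intro u hu
    rw [mem_image_erase] at hu
    rw [Finset.mem_powerset]
    intro j hj
    have : j ∈ insert i s' := Finset.mem_powerset.mp (hY hu.2) (Finset.mem_insert_of_mem hj)
    rcases Finset.mem_insert.mp this with rfl | h
    · exact absurd hj hu.1
    · exact h
  have hY0 : (Y.filter (fun x => i ∉ x)) ⊆ s'.powerset := by
    intro y hy
    rw [Finset.mem_filter] at hy
    rw [Finset.mem_powerset]
    intro j hj
    have : j ∈ insert i s' := Finset.mem_powerset.mp (hY hy.1) hj
    rcases Finset.mem_insert.mp this with rfl | h
    · exact absurd hj hy.2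
    · exact h
  rw [card_split i (X ∩ barOn (insert i s') Y)]
  congr 1
  · congr 1
    ext z
    simp only [Finset.mem_filter, Finset.mem_inter]
    constructor
    · rintro ⟨⟨hzX, hzB⟩, hiz⟩
      rw [mem_barOn hY] at hzB
      obtain ⟨hzs, hsz⟩ := hzB
      have hzs' : z ⊆ s' := by
        intro j hj
        rcases Finset.mem_insert.mp (hzs hj) with rfl | h
        · exact absurd hj hiz
        · exact h
      refine ⟨⟨hzX, hiz⟩, ?_⟩
      rw [mem_barOn hY1]
      refine ⟨hzs', ?_⟩
      rw [mem_image_erase]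
      have he : insert i (s' \ z) = insert i s' \ z := by
        rw [Finset.insert_sdiff_of_notMem _ hiz]
      refine ⟨by simp [hi], ?_⟩
      rw [he]; exact hsz
    · rintro ⟨⟨hzX, hiz⟩, hzB⟩
      rw [mem_barOn hY1] at hzB
      obtain ⟨hzs', hsz⟩ := hzB
      rw [mem_image_erase] at hsz
      refine ⟨⟨hzX, ?_⟩, hiz⟩
      rw [mem_barOn hY]
      refine ⟨hzs'.trans (Finset.subset_insert i s'), ?_⟩
      rw [Finset.insert_sdiff_of_notMem _ hiz]
      exact hsz.2
  · congr 1
    ext u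
    simp only [Finset.mem_inter, mem_image_erase]
    constructor
    · rintro ⟨hiu, huX, huB⟩
      rw [mem_barOn hY] at huB
      obtain ⟨hus, hsu⟩ := huB
      have hus' : u ⊆ s' := by
        intro j hj
        rcases Finset.mem_insert.mp (hus (Finset.mem_insert_of_mem hj)) with rfl | h
        · exact absurd hj hiu
        · exact h
      refine ⟨⟨hiu, huX⟩, ?_⟩
      rw [mem_barOn hY0]
      refine ⟨hus', ?_⟩
      rw [Finset.mem_filter]
      have he : insert i s' \ insert i u = s' \ u := by
        ext j
        simp only [Finset.mem_sdiff, Finset.mem_insert]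
        constructor
        · rintro ⟨rfl | hj, hni⟩
          · exact absurd (Or.inl rfl) hni
          · exact ⟨hj, fun hju => hni (Or.inr hju)⟩
        · rintro ⟨hj, hnu⟩
          have : j ≠ i := fun h => hi (h ▸ hj)
          exact ⟨Or.inr hj, fun h => by rcases h with rfl | h; exact this rfl; exact hnu h⟩
      rw [he] at hsu
      refine ⟨hsu, ?_⟩
      simp [hi]
    · rintro ⟨⟨hiu, huX⟩, huB⟩
      rw [mem_barOn hY0] at huB
      obtain ⟨hus', hsu⟩ := huB
      rw [Finset.mem_filter] at hsu
      refine ⟨hiu, huX, ?_⟩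
      rw [mem_barOn hY]
      constructor
      · intro j hj
        rcases Finset.mem_insert.mp hj with rfl | h
        · exact Finset.mem_insert_self _ s'
        · exact Finset.mem_insert_of_mem (hus' h)
      · have he : insert i s' \ insert i u = s' \ u := by
          ext j
          simp only [Finset.mem_sdiff, Finset.mem_insert]
          constructor
          · rintro ⟨rfl | hj, hni⟩
            · exact absurd (Or.inl rfl) hni
            · exact ⟨hj, fun hju => hni (Or.inr hju)⟩
          · rintro ⟨hj, hnu⟩
            have : j ≠ i := fun h => hi (h ▸ hj)
            exact ⟨Or.inr hj, fun h => by rcases h with rfl | h; exact this rfl; exact hnu h⟩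
        rw [he]
        exact hsu.1

lemma bit_a (a b c d : ℕ) (ha : a ≤ 1) (hb : b ≤ 1) (hc : c ≤ 1) (hd : d ≤ 1) :
    a * b + c * d + a * c + b * d ≤ a * d + b * c + min (a + d) (b + c) := by
  interval_cases a <;> interval_cases b <;> interval_cases c <;> interval_cases d <;> decide

lemma bit_b (a b c d : ℕ) (ha : a ≤ 1) (hb : b ≤ 1) (hc : c ≤ 1) (hd : d ≤ 1) :
    a * b + c * d + a * d + b * c ≤ a * c + b * d + min (a + c) (b + d) := by
  interval_cases a <;> interval_cases b <;> interval_cases c <;> interval_cases d <;> decide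

lemma card_as_sum {Ω U : Finset (Finset (Fin n))} (hU : U ⊆ Ω) :
    U.card = ∑ v ∈ Ω, (if v ∈ U then 1 else 0) := by
  rw [← Finset.card_filter]
  congr 1
  ext v
  simp only [Finset.mem_filter]
  exact ⟨fun h => ⟨hU h, h⟩, fun h => h.2⟩

lemma inter_as_sum {Ω U V : Finset (Finset (Fin n))} (hU : U ⊆ Ω) :
    (U ∩ V).card = ∑ v ∈ Ω, (if v ∈ U then 1 else 0) * (if v ∈ V then 1 else 0) := by
  rw [card_as_sum (show U ∩ V ⊆ Ω from fun v hv => hU (Finset.mem_inter.mp hv).1)]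
  apply Finset.sum_congr rfl
  intro v _
  by_cases h1 : v ∈ U <;> by_cases h2 : v ∈ V <;> simp [h1, h2]

lemma interBar_as_sum {s' : Finset (Fin n)} {U V : Finset (Finset (Fin n))}
    (hU : U ⊆ s'.powerset) (hV : V ⊆ s'.powerset) :
    (U ∩ barOn s' V).card
      = ∑ v ∈ s'.powerset, (if v ∈ U then 1 else 0) * (if s' \ v ∈ V then 1 else 0) := by
  have hsub : U ∩ barOn s' V ⊆ s'.powerset :=
    fun v hv => hU (Finset.mem_inter.mp hv).1
  rw [card_as_sum hsub]
  apply Finset.sum_congr rfl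
  intro v hv
  by_cases h1 : v ∈ U
  · have hvs : v ⊆ s' := Finset.mem_powerset.mp hv
    by_cases h2 : s' \ v ∈ V
    · have : v ∈ U ∩ barOn s' V := by
        rw [Finset.mem_inter, mem_barOn hV]
        exact ⟨h1, hvs, h2⟩
      simp [this, h1, h2]
    · have : v ∉ U ∩ barOn s' V := by
        rw [Finset.mem_inter, mem_barOn hV]
        tauto
      simp [this, h1, h2]
  · have : v ∉ U ∩ barOn s' V := by
      rw [Finset.mem_inter]
      tauto
    simp [this, h1]

lemma reindex_sum {s' : Finset (Fin n)} (f : Finset (Fin n) → ℕ) :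
    ∑ v ∈ s'.powerset, f v = ∑ v ∈ s'.powerset, f (s' \ v) := by
  apply Finset.sum_nbij' (fun v => s' \ v) (fun v => s' \ v)
  · intro v _
    exact Finset.mem_powerset.mpr (Finset.sdiff_subset)
  · intro v _
    exact Finset.mem_powerset.mpr (Finset.sdiff_subset)
  · intro v hv
    rw [Finset.sdiff_sdiff_self_left, Finset.inter_eq_right.mpr (Finset.mem_powerset.mp hv)]
  · intro v hv
    rw [Finset.sdiff_sdiff_self_left, Finset.inter_eq_right.mpr (Finset.mem_powerset.mp hv)]
  · intro v hv
    rw [Finset.sdiff_sdiff_self_left, Finset.inter_eq_right.mpr (Finset.mem_powerset.mp hv)]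

lemma my_ite_le_one {P : Prop} [Decidable P] : (if P then (1:ℕ) else 0) ≤ 1 := by
  split <;> omega

lemma pointwise_a {Ω X0 X1 Y0 Y1 : Finset (Finset (Fin n))}
    (h0 : X0 ⊆ Ω) (h1 : X1 ⊆ Ω) (h2 : Y0 ⊆ Ω) (h3 : Y1 ⊆ Ω) :
    (X0 ∩ X1).card + (Y0 ∩ Y1).card + (X0 ∩ Y0).card + (X1 ∩ Y1).card
      ≤ (X0 ∩ Y1).card + (X1 ∩ Y0).card
        + min (X0.card + Y1.card) (X1.card + Y0.card) := by
  classical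
  set a := fun v : Finset (Fin n) => if v ∈ X0 then (1:ℕ) else 0
  set b := fun v : Finset (Fin n) => if v ∈ X1 then (1:ℕ) else 0
  set c := fun v : Finset (Fin n) => if v ∈ Y0 then (1:ℕ) else 0
  set d := fun v : Finset (Fin n) => if v ∈ Y1 then (1:ℕ) else 0
  have key : ∑ v ∈ Ω, (a v * b v + c v * d v + a v * c v + b v * d v)
      ≤ ∑ v ∈ Ω, (a v * d v + b v * c v) + ∑ v ∈ Ω, min (a v + d v) (b v + c v) := by
    rw [← Finset.sum_add_distrib]
    apply Finset.sum_le_sum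
    intro v _
    have := bit_a (a v) (b v) (c v) (d v) my_ite_le_one my_ite_le_one my_ite_le_one my_ite_le_one
    omega
  have hmin : ∑ v ∈ Ω, min (a v + d v) (b v + c v)
      ≤ min (X0.card + Y1.card) (X1.card + Y0.card) := by
    apply le_min
    · calc ∑ v ∈ Ω, min (a v + d v) (b v + c v) ≤ ∑ v ∈ Ω, (a v + d v) :=
            Finset.sum_le_sum (fun v _ => min_le_left _ _)
        _ = X0.card + Y1.card := by
            rw [Finset.sum_add_distrib, ← card_as_sum h0, ← card_as_sum h3]
    · calc ∑ v ∈ Ω, min (a v + d v) (b v + c v) ≤ ∑ v ∈ Ω, (b v + c v) :=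
            Finset.sum_le_sum (fun v _ => min_le_right _ _)
        _ = X1.card + Y0.card := by
            rw [Finset.sum_add_distrib, ← card_as_sum h1, ← card_as_sum h2]
  have e1 : (X0 ∩ X1).card = ∑ v ∈ Ω, a v * b v := inter_as_sum h0
  have e2 : (Y0 ∩ Y1).card = ∑ v ∈ Ω, c v * d v := inter_as_sum h2
  have e3 : (X0 ∩ Y0).card = ∑ v ∈ Ω, a v * c v := inter_as_sum h0
  have e4 : (X1 ∩ Y1).card = ∑ v ∈ Ω, b v * d v := inter_as_sum h1
  have e5 : (X0 ∩ Y1).card = ∑ v ∈ Ω, a v * d v := inter_as_sum h0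
  have e6 : (X1 ∩ Y0).card = ∑ v ∈ Ω, b v * c v := inter_as_sum h1
  rw [e1, e2, e3, e4, e5, e6]
  rw [show ∑ v ∈ Ω, a v * b v + ∑ v ∈ Ω, c v * d v + ∑ v ∈ Ω, a v * c v + ∑ v ∈ Ω, b v * d v
      = ∑ v ∈ Ω, (a v * b v + c v * d v + a v * c v + b v * d v) by
    rw [Finset.sum_add_distrib, Finset.sum_add_distrib, Finset.sum_add_distrib]]
  rw [show ∑ v ∈ Ω, a v * d v + ∑ v ∈ Ω, b v * c v = ∑ v ∈ Ω, (a v * d v + b v * c v) by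
    rw [Finset.sum_add_distrib]]
  omega

lemma pointwise_b {s' : Finset (Fin n)} {X0 X1 Y0 Y1 : Finset (Finset (Fin n))}
    (h0 : X0 ⊆ s'.powerset) (h1 : X1 ⊆ s'.powerset)
    (h2 : Y0 ⊆ s'.powerset) (h3 : Y1 ⊆ s'.powerset) :
    (X0 ∩ X1).card + (Y0 ∩ Y1).card
      + (X0 ∩ barOn s' Y1).card + (X1 ∩ barOn s' Y0).card
      ≤ (X0 ∩ barOn s' Y0).card + (X1 ∩ barOn s' Y1).card
        + min (X0.card + Y0.card) (X1.card + Y1.card) := by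
  classical
  set Ω := s'.powerset with hΩ
  set a := fun v : Finset (Fin n) => if v ∈ X0 then (1:ℕ) else 0
  set b := fun v : Finset (Fin n) => if v ∈ X1 then (1:ℕ) else 0
  set c := fun v : Finset (Fin n) => if s' \ v ∈ Y0 then (1:ℕ) else 0
  set d := fun v : Finset (Fin n) => if s' \ v ∈ Y1 then (1:ℕ) else 0
  have key : ∑ v ∈ Ω, (a v * b v + c v * d v + a v * d v + b v * c v)
      ≤ ∑ v ∈ Ω, (a v * c v + b v * d v) + ∑ v ∈ Ω, min (a v + c v) (b v + d v) := by
    rw [← Finset.sum_add_distrib]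
    apply Finset.sum_le_sum
    intro v _
    have := bit_b (a v) (b v) (c v) (d v) my_ite_le_one my_ite_le_one my_ite_le_one my_ite_le_one
    omega
  have hc : ∑ v ∈ Ω, c v = Y0.card := by
    rw [card_as_sum h2, reindex_sum (fun v => if v ∈ Y0 then (1:ℕ) else 0)]
  have hd : ∑ v ∈ Ω, d v = Y1.card := by
    rw [card_as_sum h3, reindex_sum (fun v => if v ∈ Y1 then (1:ℕ) else 0)]
  have hmin : ∑ v ∈ Ω, min (a v + c v) (b v + d v)
      ≤ min (X0.card + Y0.card) (X1.card + Y1.card) := by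
    apply le_min
    · calc ∑ v ∈ Ω, min (a v + c v) (b v + d v) ≤ ∑ v ∈ Ω, (a v + c v) :=
            Finset.sum_le_sum (fun v _ => min_le_left _ _)
        _ = X0.card + Y0.card := by
            rw [Finset.sum_add_distrib, ← card_as_sum h0, hc]
    · calc ∑ v ∈ Ω, min (a v + c v) (b v + d v) ≤ ∑ v ∈ Ω, (b v + d v) :=
            Finset.sum_le_sum (fun v _ => min_le_right _ _)
        _ = X1.card + Y1.card := by
            rw [Finset.sum_add_distrib, ← card_as_sum h1, hd]
  have e1 : (X0 ∩ X1).card = ∑ v ∈ Ω, a v * b v := inter_as_sum h0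
  have e2 : (Y0 ∩ Y1).card = ∑ v ∈ Ω, c v * d v := by
    rw [inter_as_sum h2,
      reindex_sum (fun v => (if v ∈ Y0 then (1:ℕ) else 0) * (if v ∈ Y1 then 1 else 0))]
  have e3 : (X0 ∩ barOn s' Y1).card = ∑ v ∈ Ω, a v * d v := interBar_as_sum h0 h3
  have e4 : (X1 ∩ barOn s' Y0).card = ∑ v ∈ Ω, b v * c v := interBar_as_sum h1 h2
  have e5 : (X0 ∩ barOn s' Y0).card = ∑ v ∈ Ω, a v * c v := interBar_as_sum h0 h2
  have e6 : (X1 ∩ barOn s' Y1).card = ∑ v ∈ Ω, b v * d v := interBar_as_sum h1 h3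
  rw [e1, e2, e3, e4, e5, e6]
  rw [show ∑ v ∈ Ω, a v * b v + ∑ v ∈ Ω, c v * d v + ∑ v ∈ Ω, a v * d v + ∑ v ∈ Ω, b v * c v
      = ∑ v ∈ Ω, (a v * b v + c v * d v + a v * d v + b v * c v) by
    rw [Finset.sum_add_distrib, Finset.sum_add_distrib, Finset.sum_add_distrib]]
  rw [show ∑ v ∈ Ω, a v * c v + ∑ v ∈ Ω, b v * d v = ∑ v ∈ Ω, (a v * c v + b v * d v) by
    rw [Finset.sum_add_distrib]]
  omega

lemma powerset_subset_of_bot {i : Fin n} {s' : Finset (Fin n)}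
    {X : Finset (Finset (Fin n))} (hX : X ⊆ (insert i s').powerset) :
    X.filter (fun x => i ∉ x) ⊆ s'.powerset := by
  intro x hx
  rw [Finset.mem_filter] at hx
  rw [Finset.mem_powerset]
  intro j hj
  rcases Finset.mem_insert.mp (Finset.mem_powerset.mp (hX hx.1) hj) with rfl | h
  · exact absurd hj hx.2
  · exact h

lemma powerset_subset_of_top {i : Fin n} {s' : Finset (Fin n)}
    {X : Finset (Finset (Fin n))} (hX : X ⊆ (insert i s').powerset) :
    (X.filter (fun z => i ∈ z)).image (fun z => z.erase i) ⊆ s'.powerset := by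
  intro u hu
  rw [mem_image_erase] at hu
  rw [Finset.mem_powerset]
  intro j hj
  have : j ∈ insert i s' :=
    Finset.mem_powerset.mp (hX hu.2) (Finset.mem_insert_of_mem hj)
  rcases Finset.mem_insert.mp this with rfl | h
  · exact absurd hj hu.1
  · exact h

/-- The main induction: the pair functional bound. -/
theorem PF_le : ∀ (s : Finset (Fin n)) (X Y : Finset (Finset (Fin n))),
    X ⊆ s.powerset → Y ⊆ s.powerset →
    PF s X Y ≤ 2 * binF (X.card + Y.card) + 2 * (X.card + Y.card - 2 ^ s.card) := by
  intro s
  induction s using Finset.induction_on with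
  | empty =>
    intro X Y hX hY
    rw [Finset.powerset_empty] at hX hY
    have hb2 : binF 2 = 1 := by
      rw [show (2:ℕ) = 2*1 by norm_num, binF_two_mul]
      simp [binF_succ, binF_zero, s2_zero]
    have hE : ∀ Z : Finset (Finset (Fin n)), Z ⊆ {∅} → E2 Z = 0 := by
      intro Z hZ
      rw [E2]
      rw [Finset.card_eq_zero, Finset.filter_eq_empty_iff]
      rintro ⟨z1, z2⟩ hz
      rw [Finset.mem_product] at hz
      have h1 : z1 = ∅ := Finset.mem_singleton.mp (hZ hz.1)
      have h2 : z2 = ∅ := Finset.mem_singleton.mp (hZ hz.2)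
      simp [h1, h2]
    rcases Finset.subset_singleton_iff.mp hX with rfl | rfl <;>
      rcases Finset.subset_singleton_iff.mp hY with rfl | rfl
    · simp [PF, hE ∅ (by simp), binF_zero, E2]
    · simp [PF, hE _ hY, binF_succ, binF_zero, s2_zero, E2, barOn, Finset.filter_singleton, symmDiff_self]
    · simp [PF, hE _ hX, binF_succ, binF_zero, s2_zero, E2, barOn, Finset.filter_singleton, symmDiff_self]
    · have : ({∅} : Finset (Finset (Fin n))) ∩ barOn ∅ {∅} = {∅} := by
        rw [barOn]
        simp
      rw [PF, hE _ (by simp), this]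
      simp only [Finset.inter_self, Finset.card_singleton, Finset.card_empty, pow_zero]
      rw [hb2]
      simp
  | @insert i s' hi ih =>
    intro X Y hX hY
    set X0 := X.filter (fun x => i ∉ x) with hX0d
    set X1 := (X.filter (fun z => i ∈ z)).image (fun z => z.erase i) with hX1d
    set Y0 := Y.filter (fun x => i ∉ x) with hY0d
    set Y1 := (Y.filter (fun z => i ∈ z)).image (fun z => z.erase i) with hY1d
    have hX0 : X0 ⊆ s'.powerset := powerset_subset_of_bot hX
    have hX1 : X1 ⊆ s'.powerset := powerset_subset_of_top hX
    have hY0 : Y0 ⊆ s'.powerset := powerset_subset_of_bot hY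
    have hY1 : Y1 ⊆ s'.powerset := powerset_subset_of_top hY
    have hcX : X.card = X0.card + X1.card := card_split i X
    have hcY : Y.card = Y0.card + Y1.card := card_split i Y
    set j := s'.card with hj
    have hcard : (insert i s').card = j + 1 := Finset.card_insert_of_notMem hi
    have hbx0 : X0.card ≤ 2 ^ j := by
      calc X0.card ≤ s'.powerset.card := Finset.card_le_card hX0
        _ = 2 ^ j := by rw [Finset.card_powerset]
    have hbx1 : X1.card ≤ 2 ^ j := by
      calc X1.card ≤ s'.powerset.card := Finset.card_le_card hX1
        _ = 2 ^ j := by rw [Finset.card_powerset]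
    have hby0 : Y0.card ≤ 2 ^ j := by
      calc Y0.card ≤ s'.powerset.card := Finset.card_le_card hY0
        _ = 2 ^ j := by rw [Finset.card_powerset]
    have hby1 : Y1.card ≤ 2 ^ j := by
      calc Y1.card ≤ s'.powerset.card := Finset.card_le_card hY1
        _ = 2 ^ j := by rw [Finset.card_powerset]
    have hEX : E2 X = E2 X0 + E2 X1 + 2 * (X0 ∩ X1).card := E2_split i X
    have hEY : E2 Y = E2 Y0 + E2 Y1 + 2 * (Y0 ∩ Y1).card := E2_split i Y
    have hIXY : (X ∩ Y).card = (X0 ∩ Y0).card + (X1 ∩ Y1).card := inter_split i X Y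
    have hBXY : (X ∩ barOn (insert i s') Y).card
        = (X0 ∩ barOn s' Y1).card + (X1 ∩ barOn s' Y0).card := bar_split hi X Y hX hY
    rw [hcard]
    rcases le_total X1.card X0.card with hxc | hxc <;> rcases le_total Y1.card Y0.card with hyc | hyc
    · -- same sign : use pairing a : (X0,Y1), (X1,Y0)
      have hpa := pointwise_a hX0 hX1 hY0 hY1
      have ih1 := ih X0 Y1 hX0 hY1
      have ih2 := ih X1 Y0 hX1 hY0
      have hphi := phi_superadd' j (X0.card + Y1.card) (X1.card + Y0.card)
        (by omega) (by omega) (by omega) (by omega)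
      rw [PF] at *
      rw [hEX, hEY, hIXY, hBXY]
      rw [show X0.card + Y1.card + (X1.card + Y0.card) = X.card + Y.card by omega] at hphi
      omega
    · -- opposite sign : use pairing b : (X0,Y0), (X1,Y1)
      have hpb := pointwise_b hX0 hX1 hY0 hY1
      have ih1 := ih X0 Y0 hX0 hY0
      have ih2 := ih X1 Y1 hX1 hY1
      have hphi := phi_superadd' j (X0.card + Y0.card) (X1.card + Y1.card)
        (by omega) (by omega) (by omega) (by omega)
      rw [PF] at *
      rw [hEX, hEY, hIXY, hBXY]
      rw [show X0.card + Y0.card + (X1.card + Y1.card) = X.card + Y.card by omega] at hphi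
      omega
    · -- opposite sign : use pairing b
      have hpb := pointwise_b hX0 hX1 hY0 hY1
      have ih1 := ih X0 Y0 hX0 hY0
      have ih2 := ih X1 Y1 hX1 hY1
      have hphi := phi_superadd' j (X0.card + Y0.card) (X1.card + Y1.card)
        (by omega) (by omega) (by omega) (by omega)
      rw [PF] at *
      rw [hEX, hEY, hIXY, hBXY]
      rw [show X0.card + Y0.card + (X1.card + Y1.card) = X.card + Y.card by omega] at hphi
      omega
    · -- same sign : use pairing a
      have hpa := pointwise_a hX0 hX1 hY0 hY1
      have ih1 := ih X0 Y1 hX0 hY1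
      have ih2 := ih X1 Y0 hX1 hY0
      have hphi := phi_superadd' j (X0.card + Y1.card) (X1.card + Y0.card)
        (by omega) (by omega) (by omega) (by omega)
      rw [PF] at *
      rw [hEX, hEY, hIXY, hBXY]
      rw [show X0.card + Y1.card + (X1.card + Y0.card) = X.card + Y.card by omega] at hphi
      omega



lemma E2_eq_twice (A : Finset (Finset (Fin n))) : E2 A = 2 * edgeCount A := by
  classical
  rw [edgeCount, ← E2]
  suffices h : Even (E2 A) by
    obtain ⟨k, hk⟩ := h
    omega
  rw [E2]
  set S := (A ×ˢ A).filter (fun p => (symmDiff p.1 p.2).card = 1) with hS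
  let e := Fintype.equivFin (Finset (Fin n))
  have hsplit := Finset.card_filter_add_card_filter_not
    (p := fun p : Finset (Fin n) × Finset (Fin n) => e p.1 < e p.2) (s := S)
  have hne : ∀ p ∈ S, p.1 ≠ p.2 := by
    intro p hp heq
    rw [hS, Finset.mem_filter, heq] at hp
    simp [symmDiff_self] at hp
  have hswap : ∀ p ∈ S, (p.2, p.1) ∈ S := by
    intro p hp
    rw [hS, Finset.mem_filter, Finset.mem_product] at hp ⊢
    refine ⟨⟨hp.1.2, hp.1.1⟩, ?_⟩
    show (symmDiff p.2 p.1).card = 1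
    rw [symmDiff_comm]
    exact hp.2
  have hbij : (S.filter (fun p => ¬ e p.1 < e p.2)).card
      = (S.filter (fun p => e p.1 < e p.2)).card := by
    apply Finset.card_nbij' (fun p => (p.2, p.1)) (fun p => (p.2, p.1))
    · intro p hp
      rw [Finset.mem_coe, Finset.mem_filter] at hp
      rw [Finset.mem_coe, Finset.mem_filter]
      refine ⟨hswap p hp.1, ?_⟩
      have := hne p hp.1
      have hlt : e p.2 < e p.1 := by
        rcases lt_trichotomy (e p.1) (e p.2) with h | h | h
        · exact absurd h hp.2
        · exact absurd (e.injective h) this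
        · exact h
      exact hlt
    · intro p hp
      rw [Finset.mem_coe, Finset.mem_filter] at hp
      rw [Finset.mem_coe, Finset.mem_filter]
      exact ⟨hswap p hp.1, fun h => absurd hp.2 (not_lt.mpr (le_of_lt h))⟩
    · intro p _; rfl
    · intro p _; rfl
  exact ⟨(S.filter (fun p => e p.1 < e p.2)).card, by omega⟩

theorem stmt11 (n : ℕ) (hn : 1 ≤ n) (A : Finset (Finset (Fin n)))
    (hA : 2 ^ (n - 1) ≤ A.card) :
    (2 * edgeCount A + (A ∩ barFam A).card : ℤ) ≤
      2 * binF A.card + 2 * A.card - 2 ^ n := by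
  classical
  have hsub : A ⊆ (Finset.univ : Finset (Fin n)).powerset := by
    intro x _
    exact Finset.mem_powerset.mpr (Finset.subset_univ x)
  have hbar : barOn Finset.univ A = barFam A := by
    rw [barOn, barFam]
    apply Finset.image_congr
    intro x _
    exact (Finset.compl_eq_univ_sdiff x).symm
  have hPF := PF_le Finset.univ A A hsub hsub
  rw [PF, hbar, Finset.inter_self] at hPF
  have hcardu : (Finset.univ : Finset (Fin n)).card = n := by
    rw [Finset.card_univ, Fintype.card_fin]
  rw [hcardu] at hPF
  rw [show A.card + A.card = 2 * A.card by ring, binF_two_mul] at hPF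
  have hE2 : E2 A = 2 * edgeCount A := E2_eq_twice A
  have hpow : 2 ^ n = 2 * 2 ^ (n - 1) := by
    rw [← pow_succ']
    congr 1
    omega
  have hkey : 2 * edgeCount A + (A ∩ barFam A).card + 2 ^ n ≤ 2 * binF A.card + 2 * A.card := by
    omega
  have hc : ((A ∩ barFam A).card : ℤ) = ((A ∩ barFam A).card : ℕ) := rfl
  push_cast
  have := (Int.ofNat_le).mpr hkey
  push_cast at this
  linarith
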